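/- Let p be prime, r ≥ 2, and let G = (Z/p)^r ⋊ ⟨g⟩ where g ∈ GL_r(p) is a nontrivial scalar matrix. Then d(G) = r + 1. -/

import Mathlib

noncomputable def dG (G : Type*) [Group G] : ℕ :=
  sInf {n | ∃ s : Finset G, s.card = n ∧ Subgroup.closure (s : Set G) = ⊤}

def Flexible (G : Type*) [Group G] (k : ℕ) : Prop :=
  ∀ x : Fin k → G, dG ↥(Subgroup.closure (Set.range x)) = k →
    ∃ y : Fin (dG G - k) → G, Subgroup.closure (Set.range x ∪ Set.range y) = ⊤


/-- The homomorphism sending an additive automorphism to the corresponding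
multiplicative automorphism. -/
def addAutToMulAut (A : Type*) [AddGroup A] : Multiplicative (AddAut A) →* MulAut (Multiplicative A) where
  toFun e := AddEquiv.toMultiplicative e.toAdd
  map_one' := rfl
  map_mul' _ _ := rfl

/-- The action of `⟨g⟩ ≤ GL_r(p)` on `(ℤ/p)^r` by automorphisms. -/
noncomputable def scalarAction {p r : ℕ} [Fact p.Prime] (g : GL (Fin r) (ZMod p)) :
    Subgroup.zpowers g →* MulAut (Multiplicative (Fin r → ZMod p)) :=
  ((addAutToMulAut (Fin r → ZMod p)).comp
    ((DistribMulAction.toAddAut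
        (LinearMap.GeneralLinearGroup (ZMod p) (Fin r → ZMod p)) (Fin r → ZMod p)).comp
      (Matrix.GeneralLinearGroup.toLin.toMonoidHom))).comp (Subgroup.zpowers g).subtype

/-!
The `r` standard basis vectors together with `g` generate the group. Conversely, since `g ≠ 1`
some generator `x` acts by a scalar `c ≠ 1`, and conjugating by the translation `w` with
`w + a - c • w = 0` kills its translation part `a`. As `⟨g⟩` acts by scalars, for every subspace
`U` the elements whose translation part lies in `U` form a subgroup; hence the translation parts
of the other generators span `(ℤ/p)^r`, so there are at least `r` of them.
-/

open SemidirectProduct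

section dG

variable {G : Type*} [Group G]

lemma dG_le_card {s : Finset G} (hs : Subgroup.closure (s : Set G) = ⊤) : dG G ≤ s.card :=
  Nat.sInf_le ⟨s, rfl, hs⟩

lemma le_dG {n : ℕ} {s : Finset G} (hs : Subgroup.closure (s : Set G) = ⊤)
    (hmin : ∀ t : Finset G, Subgroup.closure (t : Set G) = ⊤ → n ≤ t.card) : n ≤ dG G :=
  le_csInf ⟨_, s, rfl, hs⟩ fun _ ⟨t, ht, hgen⟩ ↦ ht ▸ hmin t hgen

end dG

lemma Subgroup.closure_ofAdd_image_eq_top {n : ℕ} {M : Type*} [AddCommGroup M]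
    [Module (ZMod n) M] {S : Set M} (hS : Submodule.span (ZMod n) S = ⊤) :
    Subgroup.closure (Multiplicative.ofAdd '' S) = ⊤ := by
  have hspan :
      Submodule.span (ZMod n) S ≤ AddSubgroup.toZModSubmodule n (AddSubgroup.closure S) :=
    Submodule.span_le.mpr AddSubgroup.subset_closure
  rw [hS] at hspan
  apply Subgroup.toAddSubgroup'.injective
  rw [Subgroup.toAddSubgroup'_closure, Equiv.preimage_image, OrderIso.map_top]
  exact eq_top_iff.mpr fun x _ ↦ hspan trivial

lemma SemidirectProduct.closure_image_inl_union_image_inr_eq_top {N G : Type*} [Group N] [Group G]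
    {φ : G →* MulAut N} {S : Set N} {T : Set G} (hS : Subgroup.closure S = ⊤)
    (hT : Subgroup.closure T = ⊤) :
    Subgroup.closure (inl '' S ∪ inr '' T : Set (N ⋊[φ] G)) = ⊤ := by
  rw [eq_top_iff]
  rintro x -
  rw [← inl_left_mul_inr_right x]
  refine mul_mem ?_ ?_
  · have hS' : (Subgroup.closure S).map inl ≤
        Subgroup.closure (inl '' S ∪ inr '' T : Set (N ⋊[φ] G)) := by
      rw [MonoidHom.map_closure]
      exact Subgroup.closure_mono Set.subset_union_left
    exact hS' ⟨x.left, hS ▸ Subgroup.mem_top _, rfl⟩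
  · have hT' : (Subgroup.closure T).map inr ≤
        Subgroup.closure (inl '' S ∪ inr '' T : Set (N ⋊[φ] G)) := by
      rw [MonoidHom.map_closure]
      exact Subgroup.closure_mono Set.subset_union_right
    exact hT' ⟨x.right, hT ▸ Subgroup.mem_top _, rfl⟩

lemma Subgroup.closure_singleton_mk_zpowers {G : Type*} [Group G] (g : G) :
    Subgroup.closure {(⟨g, Subgroup.mem_zpowers g⟩ : Subgroup.zpowers g)} = ⊤ := by
  rw [← Subgroup.zpowers_eq_closure, eq_top_iff]
  rintro ⟨_, k, rfl⟩ -
  exact ⟨k, Subtype.ext (by simp)⟩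

section ActsByScalars

variable (K : Type*) {V H : Type*} [Field K] [AddCommGroup V] [Module K V] [Group H]

def ActsByScalars (φ : H →* MulAut (Multiplicative V)) : Prop :=
  ∀ h : H, ∃ c : K, ∀ a : Multiplicative V, (φ h a).toAdd = c • a.toAdd

variable {K} {φ : H →* MulAut (Multiplicative V)}

def ActsByScalars.leftSubgroup (hφ : ActsByScalars K φ) (U : Submodule K V) :
    Subgroup (Multiplicative V ⋊[φ] H) where
  carrier := {x | x.left.toAdd ∈ U}
  one_mem' := U.zero_mem
  mul_mem' {a b} ha hb := by
    obtain ⟨c, hc⟩ := hφ a.right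
    simpa only [Set.mem_ofPred_eq, mul_left, toAdd_mul, hc] using U.add_mem ha (U.smul_mem c hb)
  inv_mem' {a} ha := by
    obtain ⟨c, hc⟩ := hφ a.right⁻¹
    simpa only [Set.mem_ofPred_eq, inv_left, hc, toAdd_inv] using U.smul_mem c (U.neg_mem ha)

lemma ActsByScalars.exists_conj_left_eq_one (hφ : ActsByScalars K φ)
    {x : Multiplicative V ⋊[φ] H} (hx : φ x.right ≠ 1) :
    ∃ z : Multiplicative V ⋊[φ] H, (z * x * z⁻¹).left = 1 := by
  obtain ⟨c, hc⟩ := hφ x.right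
  have hc1 : 1 - c ≠ 0 := by
    refine sub_ne_zero.mpr fun h1 ↦ hx (MulEquiv.ext fun v ↦ ?_)
    simpa [← h1] using hc v
  refine ⟨inl (Multiplicative.ofAdd (-(1 - c)⁻¹ • x.left.toAdd)), ?_⟩
  apply Multiplicative.toAdd.injective
  simp only [mul_left, inv_left, mul_right, left_inl, right_inl, one_mul, map_one, inv_one,
    MulAut.one_apply, toAdd_mul, hc, toAdd_inv, toAdd_ofAdd, toAdd_one]
  linear_combination (norm := module) -(inv_mul_cancel₀ hc1) • x.left.toAdd

lemma ActsByScalars.finrank_lt_card_of_left_eq_one (hφ : ActsByScalars K φ)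
    {s : Finset (Multiplicative V ⋊[φ] H)}
    (hs : Subgroup.closure (s : Set (Multiplicative V ⋊[φ] H)) = ⊤)
    {x : Multiplicative V ⋊[φ] H} (hxs : x ∈ s) (hx : x.left = 1) :
    Module.finrank K V < s.card := by
  classical
  set T := (s.erase x).image fun y ↦ y.left.toAdd
  have hle : Subgroup.closure (s : Set (Multiplicative V ⋊[φ] H)) ≤
      hφ.leftSubgroup (Submodule.span K T) := by
    rw [Subgroup.closure_le]
    intro y hy
    by_cases hyx : y = x
    · simp [ActsByScalars.leftSubgroup, hyx, hx]
    · exact Submodule.subset_span (Finset.mem_image_of_mem _ (Finset.mem_erase.mpr ⟨hyx, hy⟩))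
  have hT : Submodule.span K (T : Set V) = ⊤ :=
    eq_top_iff.mpr fun v _ ↦ hle (hs ▸ Subgroup.mem_top (inl (Multiplicative.ofAdd v)))
  calc Module.finrank K V = Module.finrank K (Submodule.span K (T : Set V)) := by
        rw [hT, finrank_top]
    _ ≤ T.card := finrank_span_finset_le_card T
    _ ≤ (s.erase x).card := Finset.card_image_le
    _ < s.card := Finset.card_erase_lt_of_mem hxs

lemma ActsByScalars.finrank_lt_card (hφ : ActsByScalars K φ) (hφ1 : φ ≠ 1)
    {s : Finset (Multiplicative V ⋊[φ] H)}
    (hs : Subgroup.closure (s : Set (Multiplicative V ⋊[φ] H)) = ⊤) :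
    Module.finrank K V < s.card := by
  classical
  obtain ⟨x, hxs, hx⟩ : ∃ x ∈ s, φ x.right ≠ 1 := by
    by_contra! hall
    have hker : Subgroup.closure (s : Set (Multiplicative V ⋊[φ] H)) ≤ (φ.comp rightHom).ker :=
      (Subgroup.closure_le _).mpr fun y hy ↦ hall y hy
    rw [hs, top_le_iff, MonoidHom.ker_eq_top_iff] at hker
    exact hφ1 (MonoidHom.ext fun h ↦ by simpa using DFunLike.congr_fun hker (inr h))
  obtain ⟨z, hz⟩ := hφ.exists_conj_left_eq_one hx
  have hs' : Subgroup.closure (s.image (MulAut.conj z) : Set (Multiplicative V ⋊[φ] H)) = ⊤ := by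
    rw [Finset.coe_image]
    change Subgroup.closure ((MulAut.conj z).toMonoidHom '' _) = ⊤
    rw [← MonoidHom.map_closure, hs]
    exact Subgroup.map_top_of_surjective _ (MulEquiv.surjective _)
  calc Module.finrank K V < (s.image (MulAut.conj z)).card :=
        hφ.finrank_lt_card_of_left_eq_one hs' (Finset.mem_image_of_mem _ hxs) hz
    _ ≤ s.card := Finset.card_image_le

end ActsByScalars

section scalarAction

open Matrix

variable {p r : ℕ} [Fact p.Prime] {g : GL (Fin r) (ZMod p)}

lemma scalarAction_apply_toAdd (h : Subgroup.zpowers g) (a : Multiplicative (Fin r → ZMod p)) :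
    (scalarAction g h a).toAdd = (h.val : Matrix (Fin r) (Fin r) (ZMod p)) *ᵥ a.toAdd :=
  rfl

lemma actsByScalars_scalarAction
    (hg : ∃ c : ZMod p, (g : Matrix (Fin r) (Fin r) (ZMod p)) = Matrix.scalar (Fin r) c) :
    ActsByScalars (ZMod p) (scalarAction g) := by
  have hcenter : Subgroup.zpowers g ≤ Subgroup.center (GL (Fin r) (ZMod p)) :=
    Subgroup.zpowers_le.mpr <| GeneralLinearGroup.mem_center_iff_val_mem_range_scalar.mpr <|
      hg.imp fun _ ↦ Eq.symm
  intro h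
  obtain ⟨c, hc⟩ := GeneralLinearGroup.mem_center_iff_val_mem_range_scalar.mp (hcenter h.2)
  refine ⟨c, fun a ↦ ?_⟩
  rw [scalarAction_apply_toAdd, ← hc]
  simp

lemma scalarAction_ne_one (hg1 : g ≠ 1) : scalarAction g ≠ 1 := by
  intro h
  refine hg1 (Units.ext (Matrix.ext_iff_mulVec.mpr fun v ↦ ?_))
  have hv := congr_arg Multiplicative.toAdd
    (DFunLike.congr_fun (DFunLike.congr_fun h ⟨g, Subgroup.mem_zpowers g⟩) (Multiplicative.ofAdd v))
  rw [scalarAction_apply_toAdd] at hv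
  simpa using hv

end scalarAction

theorem dG_affine_scalar_group_general (p r : ℕ) [Fact p.Prime]
    (g : GL (Fin r) (ZMod p)) (hg1 : g ≠ 1)
    (hg : ∃ c : ZMod p, (g : Matrix (Fin r) (Fin r) (ZMod p)) = Matrix.scalar (Fin r) c) :
    dG (SemidirectProduct (Multiplicative (Fin r → ZMod p)) (Subgroup.zpowers g)
      (scalarAction g)) = r + 1 := by
  classical
  set b := Pi.basisFun (ZMod p) (Fin r)
  set s : Finset (Multiplicative (Fin r → ZMod p) ⋊[scalarAction g] Subgroup.zpowers g) :=
    insert (inr ⟨g, Subgroup.mem_zpowers g⟩)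
      (Finset.univ.image fun i ↦ inl (Multiplicative.ofAdd (b i)))
  have hs : Subgroup.closure
      (s : Set (Multiplicative (Fin r → ZMod p) ⋊[scalarAction g] Subgroup.zpowers g)) = ⊤ := by
    convert closure_image_inl_union_image_inr_eq_top
      (Subgroup.closure_ofAdd_image_eq_top b.span_eq) (Subgroup.closure_singleton_mk_zpowers g)
      using 2
    ext x
    simp [s]
  refine le_antisymm ((dG_le_card hs).trans ?_) (le_dG hs fun t ht ↦ ?_)
  · refine (Finset.card_insert_le _ _).trans ?_
    gcongr
    exact Finset.card_image_le.trans_eq (by simp)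
  · simpa using (actsByScalars_scalarAction hg).finrank_lt_card (scalarAction_ne_one hg1) ht

theorem dG_affine_scalar_group (p r : ℕ) [Fact p.Prime] (hr : 2 ≤ r)
    (g : GL (Fin r) (ZMod p)) (hg1 : g ≠ 1)
    (hg : ∃ c : ZMod p, (g : Matrix (Fin r) (Fin r) (ZMod p)) = Matrix.scalar (Fin r) c) :
    dG (SemidirectProduct (Multiplicative (Fin r → ZMod p)) (Subgroup.zpowers g)
      (scalarAction g)) = r + 1 :=
  dG_affine_scalar_group_general p r g hg1 hg
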